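/- Let u, v, x, y ∈ ℂⁿ be unit vectors, c ∈ ℂ, and G = c · x y*. Define P(Z) = Z − (I − u u*) Z (I − v v*). Then ‖G − P(G)‖_F = |c| · ‖(I − u u*) x‖ · ‖(I − v v*) y‖ ≤ |c| · ‖x − u‖ · ‖y − v‖. In particular, if ‖x − u‖ ≤ δ and ‖y − v‖ ≤ δ, then ‖P(G) − G‖_F ≤ |c| δ², so near a rank-one matrix aligned with the eigenvector pair, the tangent-space projection of the gradient differs from the gradient only by a quantity that is quadratically small. -/

import Mathlib

/-! Since `P Z - Z = -(1 - u u*) Z (1 - v v*)`, the difference `G - P G` is the rank-one matrix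
`c • ((1 - u u*) x) ((1 - v v*) y)*`, and the Frobenius norm of a rank-one matrix `a b*` is
`‖a‖ ‖b‖`. The matrix `1 - u u*` acts as the orthogonal projection onto `uᗮ`, so it kills `u`
and is a contraction: `‖(1 - u u*) x‖ = ‖(1 - u u*) (x - u)‖ ≤ ‖x - u‖`, and likewise for `y`. -/

open Matrix

/-- Frobenius inner product `⟨X,Y⟩ = tr(X*Y) = Σᵢⱼ conj(Xᵢⱼ) Yᵢⱼ` on complex matrices. -/
noncomputable def frobInner {n : ℕ} (X Y : Matrix (Fin n) (Fin n) ℂ) : ℂ :=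
  ∑ i, ∑ j, (starRingEnd ℂ) (X i j) * Y i j

/-- Frobenius norm. -/
noncomputable def frobNorm {n : ℕ} (X : Matrix (Fin n) (Fin n) ℂ) : ℝ :=
  Real.sqrt (frobInner X X).re

/-- Euclidean norm of a complex vector. -/
noncomputable def vnorm {n : ℕ} (x : Fin n → ℂ) : ℝ :=
  Real.sqrt (star x ⬝ᵥ x).re

open WithLp

open scoped InnerProductSpace Matrix.Norms.Frobenius

theorem norm_sub_inner_smul_le_norm_sub {𝕜 E : Type*} [RCLike 𝕜] [NormedAddCommGroup E]
    [InnerProductSpace 𝕜 E] {u : E} (hu : ‖u‖ = 1) (x : E) :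
    ‖x - ⟪u, x⟫_𝕜 • u‖ ≤ ‖x - u‖ := by
  have hproj : ∀ w, w - ⟪u, w⟫_𝕜 • u = (𝕜 ∙ u)ᗮ.starProjection w := fun w => by
    rw [Submodule.starProjection_orthogonal_val, Submodule.starProjection_unit_singleton 𝕜 hu]
  calc ‖x - ⟪u, x⟫_𝕜 • u‖ = ‖(𝕜 ∙ u)ᗮ.starProjection (x - u)‖ := by
        rw [hproj, map_sub, Submodule.starProjection_orthogonalComplement_singleton_eq_zero,
          sub_zero]
    _ ≤ ‖x - u‖ := Submodule.norm_starProjection_apply_le _ _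

theorem EuclideanSpace.norm_toLp_star {𝕜 n : Type*} [RCLike 𝕜] [Fintype n] (b : n → 𝕜) :
    ‖toLp 2 (star b)‖ = ‖toLp 2 b‖ := by
  simp [EuclideanSpace.norm_eq]

namespace Matrix

variable {𝕜 l m n : Type*} [RCLike 𝕜]

theorem frobenius_norm_vecMulVec [Fintype m] [Fintype n] (a : m → 𝕜) (b : n → 𝕜) :
    ‖vecMulVec a b‖ = ‖toLp 2 a‖ * ‖toLp 2 b‖ := by
  simp only [frobenius_norm_def, EuclideanSpace.norm_eq, vecMulVec_apply, norm_mul,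
    Real.rpow_two, mul_pow, ← Finset.mul_sum, ← Finset.sum_mul, ← Real.sqrt_eq_rpow]
  exact Real.sqrt_mul (Finset.sum_nonneg fun _ _ => sq_nonneg _) _

theorem mul_vecMulVec_star_mul [Fintype m] [Fintype n] (M : Matrix l m 𝕜) (a : m → 𝕜)
    (b : n → 𝕜) (N : Matrix n n 𝕜) :
    M * vecMulVec a (star b) * N = vecMulVec (M *ᵥ a) (star (Nᴴ *ᵥ b)) := by
  rw [mul_vecMulVec, vecMulVec_mul, star_mulVec, conjTranspose_conjTranspose]

theorem isHermitian_one_sub_vecMulVec_star [DecidableEq n] (u : n → 𝕜) :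
    (1 - vecMulVec u (star u)).IsHermitian :=
  isHermitian_one.sub <| by simp [IsHermitian, conjTranspose_vecMulVec]

theorem toLp_one_sub_vecMulVec_star_mulVec [Fintype n] [DecidableEq n] (u z : n → 𝕜) :
    toLp 2 ((1 - vecMulVec u (star u)) *ᵥ z) = toLp 2 z - ⟪toLp 2 u, toLp 2 z⟫_𝕜 • toLp 2 u := by
  rw [EuclideanSpace.inner_toLp_toLp, sub_mulVec, one_mulVec, vecMulVec_mulVec, dotProduct_comm,
    op_smul_eq_smul]
  rfl

end Matrix

theorem vnorm_eq_norm {n : ℕ} (z : Fin n → ℂ) : vnorm z = ‖toLp 2 z‖ := by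
  rw [vnorm, norm_eq_sqrt_re_inner (𝕜 := ℂ), EuclideanSpace.inner_toLp_toLp, dotProduct_comm]
  rfl

theorem frobNorm_eq_norm {n : ℕ} (X : Matrix (Fin n) (Fin n) ℂ) : frobNorm X = ‖X‖ := by
  simp only [frobNorm, frobInner, frobenius_norm_def, Complex.re_sum,
    ← Complex.normSq_eq_conj_mul_self, Complex.ofReal_re, Complex.normSq_eq_norm_sq,
    Real.rpow_two, ← Real.sqrt_eq_rpow]

theorem projection_gradient_quadratic_closeness_general
    {n : ℕ} (u v x y : Fin n → ℂ)
    (hu : vnorm u = 1) (hv : vnorm v = 1)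
    (c : ℂ) (G : Matrix (Fin n) (Fin n) ℂ)
    (hG : G = c • vecMulVec x (star y))
    (P : Matrix (Fin n) (Fin n) ℂ → Matrix (Fin n) (Fin n) ℂ)
    (hP : ∀ Z, P Z = Z - (1 - vecMulVec u (star u)) * Z * (1 - vecMulVec v (star v))) :
    frobNorm (G - P G) =
      ‖c‖ * vnorm ((1 - vecMulVec u (star u)).mulVec x) *
        vnorm ((1 - vecMulVec v (star v)).mulVec y) ∧
    frobNorm (G - P G) ≤ ‖c‖ * vnorm (x - u) * vnorm (y - v) ∧
    ∀ δ : ℝ, vnorm (x - u) ≤ δ → vnorm (y - v) ≤ δ →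
      frobNorm (P G - G) ≤ ‖c‖ * δ ^ 2 := by
  have hGP : G - P G = c • vecMulVec ((1 - vecMulVec u (star u)) *ᵥ x)
      (star ((1 - vecMulVec v (star v)) *ᵥ y)) := by
    rw [hP, sub_sub_cancel, hG, Matrix.mul_smul, Matrix.smul_mul, mul_vecMulVec_star_mul,
      (isHermitian_one_sub_vecMulVec_star v).eq]
  simp only [vnorm_eq_norm, frobNorm_eq_norm] at hu hv ⊢
  have hnorm : ‖G - P G‖ = ‖c‖ * ‖toLp 2 ((1 - vecMulVec u (star u)) *ᵥ x)‖ *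
      ‖toLp 2 ((1 - vecMulVec v (star v)) *ᵥ y)‖ := by
    rw [hGP, norm_smul, frobenius_norm_vecMulVec, EuclideanSpace.norm_toLp_star, mul_assoc]
  have hbound : ‖G - P G‖ ≤ ‖c‖ * ‖toLp 2 (x - u)‖ * ‖toLp 2 (y - v)‖ := by
    rw [hnorm, toLp_one_sub_vecMulVec_star_mulVec, toLp_one_sub_vecMulVec_star_mulVec, toLp_sub,
      toLp_sub]
    gcongr
    · exact norm_sub_inner_smul_le_norm_sub hu _
    · exact norm_sub_inner_smul_le_norm_sub hv _
  refine ⟨hnorm, hbound, fun δ hxδ hyδ => ?_⟩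
  have hδ : 0 ≤ δ := (norm_nonneg _).trans hxδ
  calc ‖P G - G‖ = ‖G - P G‖ := norm_sub_rev _ _
    _ ≤ ‖c‖ * δ * δ := hbound.trans <| by gcongr
    _ = ‖c‖ * δ ^ 2 := by ring

/-- Near a rank-one matrix aligned with the eigenvector pair, the tangent-space projection
of the rank-one gradient `G = c·x y*` differs from `G` only quadratically:
`‖G - P(G)‖_F = |c|·‖(I-uu*)x‖·‖(I-vv*)y‖ ≤ |c|·‖x-u‖·‖y-v‖ ≤ |c|δ²`
when `‖x-u‖ ≤ δ` and `‖y-v‖ ≤ δ`. -/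
theorem projection_gradient_quadratic_closeness
    {n : ℕ} (u v x y : Fin n → ℂ)
    (hu : vnorm u = 1) (hv : vnorm v = 1)
    (hx : vnorm x = 1) (hy : vnorm y = 1)
    (c : ℂ) (G : Matrix (Fin n) (Fin n) ℂ)
    (hG : G = c • vecMulVec x (star y))
    (P : Matrix (Fin n) (Fin n) ℂ → Matrix (Fin n) (Fin n) ℂ)
    (hP : ∀ Z, P Z = Z - (1 - vecMulVec u (star u)) * Z * (1 - vecMulVec v (star v))) :
    frobNorm (G - P G) =
      ‖c‖ * vnorm ((1 - vecMulVec u (star u)).mulVec x) *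
        vnorm ((1 - vecMulVec v (star v)).mulVec y) ∧
    frobNorm (G - P G) ≤ ‖c‖ * vnorm (x - u) * vnorm (y - v) ∧
    ∀ δ : ℝ, vnorm (x - u) ≤ δ → vnorm (y - v) ≤ δ →
      frobNorm (P G - G) ≤ ‖c‖ * δ ^ 2 :=
  projection_gradient_quadratic_closeness_general u v x y hu hv c G hG P hP
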